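/- Let m ≥ 2 and n ≥ 2 be integers. The walk matrix W(Q[m,n]) of the matrix Q[m,n] is nonsingular, i.e., det W(Q[m,n]) ≠ 0; equivalently, W(Q[m,n]) has rank n−1. -/

import Mathlib

attribute [local instance] Classical.propDecidable

open Matrix

/-- Generalized Fibonacci sequence: `F_{α,0} = 1`, `F_{α,1} = 1`,
`F_{α,k} = F_{α,k-1} + (α-1)·F_{α,k-2}`. -/
noncomputable def genFib (α : ℝ) : ℕ → ℝ
  | 0 => 1
  | 1 => 1
  | k + 2 => genFib α (k + 1) + (α - 1) * genFib α k

/-- Walk matrix of an `r × r` real matrix `B`: columns `e, B e, B² e, …, B^{r-1} e`. -/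
noncomputable def walkMatrix {r : ℕ} (B : Matrix (Fin r) (Fin r) ℝ) :
    Matrix (Fin r) (Fin r) ℝ :=
  fun i k => ((B ^ (k : ℕ)) *ᵥ (fun _ => (1 : ℝ))) i

/-- The Pascal-type quotient matrix `P[m,n]`, indexed by `1, …, n-1` (here `i ↦ i.val + 1`):
`(i,j)`-entry is `C(i, n-j)·(m-1)^{n-j}` if `i + j ≥ n`, else `0`. -/
noncomputable def Pmat (m n : ℕ) : Matrix (Fin (n - 1)) (Fin (n - 1)) ℝ :=
  fun i j =>
    if n ≤ (i.val + 1) + (j.val + 1) then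
      (Nat.choose (i.val + 1) (n - (j.val + 1)) : ℝ) * ((m : ℝ) - 1) ^ (n - (j.val + 1))
    else 0

/-- The Pascal-type quotient matrix `Q[m,n]`, indexed by `1, …, n-1` (here `i ↦ i.val + 1`):
`(i,j)`-entry is `C(i-1, n-j-1)·(m-1)^{n-j}` if `i + j ≥ n`, else `0`. -/
noncomputable def Qmat (m n : ℕ) : Matrix (Fin (n - 1)) (Fin (n - 1)) ℝ :=
  fun i j =>
    if n ≤ (i.val + 1) + (j.val + 1) then
      (Nat.choose i.val (n - (j.val + 1) - 1) : ℝ) * ((m : ℝ) - 1) ^ (n - (j.val + 1))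
    else 0

/-- Vertices of the zero-divisor graph of `F^n`: nonzero zero-divisors. -/
abbrev zdVertex (F : Type) [Field F] [Fintype F] (n : ℕ) : Type :=
  {x : Fin n → F // x ≠ 0 ∧ ∃ y : Fin n → F, y ≠ 0 ∧ x * y = 0}

/-- The zero-divisor graph `Γ(R_n)` of `R_n = F × ⋯ × F` (`n` factors). -/
def zdGraph (F : Type) [Field F] [Fintype F] (n : ℕ) : SimpleGraph (zdVertex F n) where
  Adj a b := a ≠ b ∧ (a : Fin n → F) * (b : Fin n → F) = 0
  symm := ⟨fun a b ⟨hne, h⟩ => ⟨hne.symm, by rwa [mul_comm]⟩⟩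
  loopless := ⟨fun a ⟨hne, _⟩ => hne rfl⟩

/-- The set of main eigenvalues of a finite simple graph: real numbers `μ` admitting an
eigenvector of the adjacency matrix with eigenvalue `μ` and nonzero coordinate sum. -/
noncomputable def mainEigs {V : Type} [Fintype V] (G : SimpleGraph V) : Set ℝ :=
  {μ : ℝ | ∃ v : V → ℝ, v ≠ 0 ∧ (G.adjMatrix ℝ) *ᵥ v = μ • v ∧ ∑ i, v i ≠ 0}

/-- `X_{*0}`: vertices whose `(n-1)`-st coordinate is nonzero and `n`-th coordinate is zero. -/
def Xstar0 (F : Type) [Field F] [Fintype F] (n : ℕ) (hn : 2 ≤ n) : Set (zdVertex F n) :=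
  {x | (x : Fin n → F) ⟨n - 2, by omega⟩ ≠ 0 ∧ (x : Fin n → F) ⟨n - 1, by omega⟩ = 0}

/-- `X_{0*}`: vertices whose `(n-1)`-st coordinate is zero and `n`-th coordinate is nonzero. -/
def X0star (F : Type) [Field F] [Fintype F] (n : ℕ) (hn : 2 ≤ n) : Set (zdVertex F n) :=
  {x | (x : Fin n → F) ⟨n - 2, by omega⟩ = 0 ∧ (x : Fin n → F) ⟨n - 1, by omega⟩ ≠ 0}

def subVerts (F : Type) [Field F] [Fintype F] (n : ℕ) (hn : 2 ≤ n) : Set (zdVertex F n) :=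
  Xstar0 F n hn ∪ X0star F n hn

/-- The bipartite subgraph `Γ'(R_n)` of `Γ(R_n)` induced by `X_{*0} ∪ X_{0*}`. -/
def zdSubGraph (F : Type) [Field F] [Fintype F] (n : ℕ) (hn : 2 ≤ n) :
    SimpleGraph ↥(subVerts F n hn) :=
  SimpleGraph.induce (subVerts F n hn) (zdGraph F n)

/-- The coefficient sequence `h`: `h 0 = 1`,
`h j = F_{m,j+1}^n − Σ_{r=0}^{j−1} h r · F_{m,j−r}^n` for `j ≥ 1`. -/
noncomputable def hseq (m n : ℕ) : ℕ → ℝ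
  | 0 => 1
  | j + 1 => (genFib m (j + 2)) ^ n -
      ∑ r ∈ (Finset.range (j + 1)).attach, hseq m n r.1 * (genFib m (j + 1 - r.1)) ^ n
  decreasing_by exact Finset.mem_range.mp r.2
section Aux

lemma genFib_zero (α : ℝ) : genFib α 0 = 1 := rfl

lemma genFib_one (α : ℝ) : genFib α 1 = 1 := rfl

lemma genFib_add_two (α : ℝ) (k : ℕ) :
    genFib α (k + 2) = genFib α (k + 1) + (α - 1) * genFib α k := rfl

lemma one_le_genFib (α : ℝ) (hα : 2 ≤ α) : ∀ k, 1 ≤ genFib α k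
  | 0 => le_of_eq (genFib_zero α).symm
  | 1 => le_of_eq (genFib_one α).symm
  | (k + 2) => by
      have h1 := one_le_genFib α hα (k + 1)
      have h2 := one_le_genFib α hα k
      rw [genFib_add_two]
      nlinarith

lemma genFib_cross (α : ℝ) (k j : ℕ) :
    genFib α k * genFib α (k + j + 2) - genFib α (k + 1) * genFib α (k + j + 1)
      = (-(α - 1)) ^ k * ((α - 1) * genFib α j) := by
  induction k generalizing j with
  | zero =>
      simp only [Nat.zero_add, genFib_zero, genFib_one, pow_zero, one_mul]
      rw [genFib_add_two]
      ring
  | succ k ih =>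
      have e1 : k + 1 + j + 2 = (k + j + 1) + 2 := by omega
      have e2 : k + 1 + j + 1 = (k + j + 1) + 1 := by omega
      have e3 : k + 1 + 1 = k + 2 := by omega
      rw [e1, e2, e3, genFib_add_two α (k + j + 1), genFib_add_two α k]
      have := ih (j := j)
      have e4 : k + j + 2 = (k + j + 1) + 1 := by omega
      rw [e4] at this
      linear_combination (-(α - 1)) * this

/-- Closed form for the iterated row sums of `Qmat`. -/
lemma Qmat_pow_mulVec_one (m n : ℕ) (hm : 2 ≤ m) (hn : 2 ≤ n) (k : ℕ) (i : Fin (n - 1)) :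
    ((Qmat m n ^ k) *ᵥ (fun _ => (1 : ℝ))) i
      = ((m : ℝ) - 1) ^ k * genFib (m : ℝ) k ^ (n - 2 - i.val)
          * genFib (m : ℝ) (k + 1) ^ i.val := by
  induction k generalizing i with
  | zero =>
      simp [Matrix.one_mulVec, genFib_zero, genFib_one]
  | succ k ih =>
      have hw : (Qmat m n ^ k) *ᵥ (fun _ => (1 : ℝ))
          = fun j : Fin (n - 1) => ((m : ℝ) - 1) ^ k * genFib (m : ℝ) k ^ (n - 2 - j.val)
              * genFib (m : ℝ) (k + 1) ^ j.val := funext ih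
      rw [pow_succ', ← Matrix.mulVec_mulVec, hw]
      have hii : i.val ≤ n - 2 := by have := i.isLt; omega
      -- the summand, as a function of a natural number index
      obtain ⟨g, hgdef⟩ : ∃ g : ℕ → ℝ, g = fun j : ℕ =>
          (if n ≤ (i.val + 1) + (j + 1) then
              (Nat.choose i.val (n - (j + 1) - 1) : ℝ) * ((m : ℝ) - 1) ^ (n - (j + 1))
            else 0)
            * (((m : ℝ) - 1) ^ k * genFib (m : ℝ) k ^ (n - 2 - j)
                * genFib (m : ℝ) (k + 1) ^ j) := ⟨_, rfl⟩
      have hsum1 : (Qmat m n *ᵥ fun j : Fin (n - 1) =>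
            ((m : ℝ) - 1) ^ k * genFib (m : ℝ) k ^ (n - 2 - j.val)
              * genFib (m : ℝ) (k + 1) ^ j.val) i
          = ∑ j : Fin (n - 1), g j.val := by
        simp only [Matrix.mulVec, dotProduct]
        refine Finset.sum_congr rfl (fun j _ => ?_)
        simp only [hgdef, Qmat]
      rw [hsum1, Fin.sum_univ_eq_sum_range g (n - 1)]
      -- drop the vanishing initial segment
      have hsub : Finset.Ico (n - 2 - i.val) (n - 1) ⊆ Finset.range (n - 1) := by
        intro x hx
        exact Finset.mem_range.mpr (Finset.mem_Ico.mp hx).2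
      have hzero : ∀ x ∈ Finset.range (n - 1),
          x ∉ Finset.Ico (n - 2 - i.val) (n - 1) → g x = 0 := by
        intro x hx hnx
        have hx' := Finset.mem_range.mp hx
        have hxa : x < n - 2 - i.val := by
          by_contra hcon
          exact hnx (Finset.mem_Ico.mpr ⟨by omega, hx'⟩)
        rw [hgdef]
        have : ¬ n ≤ (i.val + 1) + (x + 1) := by omega
        simp only [this, if_false, zero_mul]
      rw [← Finset.sum_subset hsub hzero, Finset.sum_Ico_eq_sum_range]
      rw [show n - 1 - (n - 2 - i.val) = i.val + 1 from by omega]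
      rw [← Finset.sum_range_reflect]
      -- expand the right-hand side with the binomial theorem
      rw [show genFib (m : ℝ) (k + 1 + 1)
            = ((m : ℝ) - 1) * genFib (m : ℝ) k + genFib (m : ℝ) (k + 1) from by
          rw [genFib_add_two]; ring]
      rw [add_pow, Finset.mul_sum]
      refine Finset.sum_congr rfl (fun t ht => ?_)
      have ht' : t ≤ i.val := by
        have := Finset.mem_range.mp ht; omega
      rw [hgdef]
      simp only []
      rw [if_pos (show n ≤ (i.val + 1) + ((n - 2 - i.val + (i.val + 1 - 1 - t)) + 1) from by omega)]
      rw [show n - (n - 2 - i.val + (i.val + 1 - 1 - t) + 1) - 1 = t from by omega]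
      rw [show n - (n - 2 - i.val + (i.val + 1 - 1 - t) + 1) = t + 1 from by omega]
      rw [show n - 2 - (n - 2 - i.val + (i.val + 1 - 1 - t)) = t from by omega]
      rw [show n - 2 - i.val + (i.val + 1 - 1 - t) = n - 2 - t from by omega]
      rw [show n - 2 - t = (n - 2 - i.val) + (i.val - t) from by omega, pow_add, mul_pow]
      ring

end Aux

/-- The walk matrix of `Q[m,n]` is nonsingular: its determinant is nonzero, equivalently
its rank is `n − 1`. -/
theorem walkMatrix_Qmat_nonsingular (m n : ℕ) (hm : 2 ≤ m) (hn : 2 ≤ n) :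
    (walkMatrix (Qmat m n)).det ≠ 0 ∧ (walkMatrix (Qmat m n)).rank = n - 1 := by
  have hm' : (2 : ℝ) ≤ (m : ℝ) := by exact_mod_cast hm
  have hF : ∀ k, (1 : ℝ) ≤ genFib (m : ℝ) k := one_le_genFib _ hm'
  have hFne : ∀ k, genFib (m : ℝ) k ≠ 0 := fun k => by
    have := hF k; intro h; rw [h] at this; linarith
  set r : Fin (n - 1) → ℝ :=
    fun k => genFib (m : ℝ) (k.val + 1) / genFib (m : ℝ) k.val with hr
  have hcross : ∀ i j : Fin (n - 1), i < j → r j ≠ r i := by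
    intro i j hij heq
    simp only [hr] at heq
    have hij' : i.val < j.val := hij
    have h2 := (div_eq_div_iff (hFne j.val) (hFne i.val)).mp heq
    have h3 := genFib_cross (m : ℝ) i.val (j.val - i.val - 1)
    rw [show i.val + (j.val - i.val - 1) + 2 = j.val + 1 from by omega,
        show i.val + (j.val - i.val - 1) + 1 = j.val from by omega] at h3
    have hne : (-((m : ℝ) - 1)) ^ i.val
        * ((((m : ℝ)) - 1) * genFib (m : ℝ) (j.val - i.val - 1)) ≠ 0 := by
      apply mul_ne_zero
      · exact pow_ne_zero _ (by linarith)
      · exact mul_ne_zero (by linarith) (hFne _)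
    apply hne
    rw [← h3]
    linear_combination h2
  have hW : walkMatrix (Qmat m n)
      = Matrix.of (fun i k : Fin (n - 1) =>
          (fun k : Fin (n - 1) => ((m : ℝ) - 1) ^ (k : ℕ)) k *
            Matrix.of (fun i k : Fin (n - 1) =>
              (fun k : Fin (n - 1) => genFib (m : ℝ) (k : ℕ) ^ (n - 2)) k *
                (Matrix.vandermonde r)ᵀ i k) i k) := by
    ext i k
    simp only [walkMatrix, Matrix.of_apply, Matrix.transpose_apply, Matrix.vandermonde_apply]
    rw [Qmat_pow_mulVec_one m n hm hn k.val i]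
    simp only [hr]
    have hii : i.val ≤ n - 2 := by have := i.isLt; omega
    have e : genFib (m : ℝ) (k : ℕ) ^ (n - 2)
        = genFib (m : ℝ) (k : ℕ) ^ (n - 2 - i.val) * genFib (m : ℝ) (k : ℕ) ^ i.val := by
      rw [← pow_add]; congr 1; omega
    rw [e, div_pow]
    have h2 : genFib (m : ℝ) ((k : ℕ) + 1) ^ (i : ℕ) / genFib (m : ℝ) (k : ℕ) ^ (i : ℕ)
        * genFib (m : ℝ) (k : ℕ) ^ (i : ℕ) = genFib (m : ℝ) ((k : ℕ) + 1) ^ (i : ℕ) :=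
      div_mul_cancel₀ _ (pow_ne_zero _ (hFne _))
    linear_combination
      (-((((m : ℝ)) - 1) ^ (k : ℕ) * genFib (m : ℝ) (k : ℕ) ^ (n - 2 - (i : ℕ)))) * h2
  have hdet : (walkMatrix (Qmat m n)).det ≠ 0 := by
    rw [hW, Matrix.det_mul_row, Matrix.det_mul_row, Matrix.det_transpose,
      Matrix.det_vandermonde]
    apply mul_ne_zero
    · exact Finset.prod_ne_zero_iff.mpr fun k _ => pow_ne_zero _ (by linarith)
    apply mul_ne_zero
    · exact Finset.prod_ne_zero_iff.mpr fun k _ => pow_ne_zero _ (hFne _)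
    · refine Finset.prod_ne_zero_iff.mpr fun i _ => ?_
      refine Finset.prod_ne_zero_iff.mpr fun j hj => ?_
      exact sub_ne_zero_of_ne (hcross i j (Finset.mem_Ioi.mp hj))
  refine ⟨hdet, ?_⟩
  have hu : IsUnit (walkMatrix (Qmat m n)) :=
    (Matrix.isUnit_iff_isUnit_det _).mpr (isUnit_iff_ne_zero.mpr hdet)
  rw [Matrix.rank_of_isUnit _ hu, Fintype.card_fin]
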